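/- arXiv:2007.00681 — 2 statements merged into one kernel-verified Lean document; each statement's English description precedes it below -/
import Mathlib

section
/- Let E ≻ 0, Y ∈ ℝ^{m×n}, K = YE⁻¹, O ∈ ℝ^{1×m}, o > 0. If the block matrix [[o², OY],[YᵀOᵀ, E]] is positive semidefinite, then for every x with xᵀE⁻¹x ≤ 1 the input u = Kx satisfies |O u| ≤ o. Hence the ellipsoid {x : xᵀE⁻¹x ≤ 1} is contained in {x : OKx ≤ o}. -/
/-!
Since `O Y (E⁻¹ x) = O K x`, the Cauchy–Schwarz inequality for the positive semidefinite block
form, evaluated on the vectors `1` and `E⁻¹ x`, gives `(O K x)² ≤ o² · (E⁻¹x)ᵀ E (E⁻¹x) =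
o² · xᵀ E⁻¹ x ≤ o²`.
-/

open Matrix

theorem Matrix.PosSemidef.dotProduct_mulVec_sq_le {ι : Type*} [Fintype ι]
    {M : Matrix ι ι ℝ} (hM : M.PosSemidef) (v w : ι → ℝ) :
    (v ⬝ᵥ M *ᵥ w) ^ 2 ≤ (v ⬝ᵥ M *ᵥ v) * (w ⬝ᵥ M *ᵥ w) := by
  have hsymm : w ⬝ᵥ M *ᵥ v = v ⬝ᵥ M *ᵥ w := by
    rw [dotProduct_mulVec, ← mulVec_transpose, dotProduct_comm,
      ← conjTranspose_eq_transpose_of_trivial, hM.isHermitian.eq]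
  have hquad : ∀ t : ℝ, 0 ≤ (v ⬝ᵥ M *ᵥ v) * (t * t) + 2 * (v ⬝ᵥ M *ᵥ w) * t
      + w ⬝ᵥ M *ᵥ w := by
    intro t
    have h := hM.dotProduct_mulVec_nonneg (t • v + w)
    simp only [star_trivial, mulVec_add, mulVec_smul, dotProduct_add, add_dotProduct,
      dotProduct_smul, smul_dotProduct, smul_eq_mul, hsymm] at h
    linarith
  have h := discrim_le_zero hquad
  rw [discrim] at h
  linarith

theorem Matrix.PosSemidef.dotProduct_mulVec_sq_le_of_fromBlocks
    {ι κ : Type*} [Fintype ι] [Fintype κ] {A : Matrix ι ι ℝ} {B : Matrix ι κ ℝ}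
    {D : Matrix κ κ ℝ} (h : (fromBlocks A B Bᵀ D).PosSemidef) (v : ι → ℝ) (w : κ → ℝ) :
    (v ⬝ᵥ B *ᵥ w) ^ 2 ≤ (v ⬝ᵥ A *ᵥ v) * (w ⬝ᵥ D *ᵥ w) := by
  have := h.dotProduct_mulVec_sq_le (Sum.elim v 0) (Sum.elim 0 w)
  simpa [fromBlocks_mulVec, sumElim_dotProduct_sumElim] using this

theorem stmt_11_general (n m : ℕ) (E : Matrix (Fin n) (Fin n) ℝ)
    (Y : Matrix (Fin m) (Fin n) ℝ) (K : Matrix (Fin m) (Fin n) ℝ)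
    (O : Matrix (Fin 1) (Fin m) ℝ) (o : ℝ)
    (hE : E.PosDef) (hK : K = Y * E⁻¹) (ho : 0 < o)
    (hblk : (Matrix.fromBlocks !![o ^ 2] (O * Y) (Yᵀ * Oᵀ) E).PosSemidef) :
    ∀ x : Fin n → ℝ, x ⬝ᵥ E⁻¹.mulVec x ≤ 1 →
      |(O.mulVec (K.mulVec x)) 0| ≤ o ∧ (O.mulVec (K.mulVec x)) 0 ≤ o := by
  intro x hx
  rw [← transpose_mul] at hblk
  have hcs := hblk.dotProduct_mulVec_sq_le_of_fromBlocks 1 (E⁻¹ *ᵥ x)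
  have hinput : (1 : Fin 1 → ℝ) ⬝ᵥ (O * Y) *ᵥ (E⁻¹ *ᵥ x) = (O *ᵥ (K *ᵥ x)) 0 := by
    simp [hK, mulVec_mulVec, Matrix.mul_assoc, dotProduct]
  have hcorner : (1 : Fin 1 → ℝ) ⬝ᵥ !![o ^ 2] *ᵥ 1 = o ^ 2 := by
    simp [dotProduct, mulVec]
  have hE_form : (E⁻¹ *ᵥ x) ⬝ᵥ E *ᵥ (E⁻¹ *ᵥ x) = x ⬝ᵥ E⁻¹ *ᵥ x := by
    rw [mulVec_mulVec, mul_nonsing_inv _ hE.det_pos.ne'.isUnit, one_mulVec, dotProduct_comm]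
  have hsq : (O *ᵥ (K *ᵥ x)) 0 ^ 2 ≤ o ^ 2 := by
    rw [hinput, hcorner, hE_form] at hcs
    nlinarith
  have habs := abs_le_of_sq_le_sq' hsq ho.le
  exact ⟨abs_le.mpr habs, habs.2⟩

/-- Input-constraint LMI: if `[[o², OY],[YᵀOᵀ, E]] ⪰ 0` with `E ≻ 0`, `K = YE⁻¹` and
`o > 0`, then every `x` with `xᵀE⁻¹x ≤ 1` gives an input `u = Kx` with `|Ou| ≤ o`;
in particular `OKx ≤ o`. -/
theorem stmt_11 (n m : ℕ) (E : Matrix (Fin n) (Fin n) ℝ)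
    (Y : Matrix (Fin m) (Fin n) ℝ) (K : Matrix (Fin m) (Fin n) ℝ)
    (O : Matrix (Fin 1) (Fin m) ℝ) (o : ℝ)
    (hE : E.PosDef) (hEsym : E.IsSymm) (hK : K = Y * E⁻¹) (ho : 0 < o)
    (hblk : (Matrix.fromBlocks !![o ^ 2] (O * Y) (Yᵀ * Oᵀ) E).PosSemidef) :
    ∀ x : Fin n → ℝ, x ⬝ᵥ E⁻¹.mulVec x ≤ 1 →
      |(O.mulVec (K.mulVec x)) 0| ≤ o ∧ (O.mulVec (K.mulVec x)) 0 ≤ o :=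
  stmt_11_general n m E Y K O o hE hK ho hblk
end

section
/- Let E ≻ 0, Y = KE, and suppose [[E + S, E Aᵀ + Yᵀ Bᵀ],[A E + B Y, E]] ⪰ 0 with S ⪯ 0 symmetric. Then (A + BK)ᵀ E⁻¹ (A + BK) − E⁻¹ ⪯ E⁻¹ S E⁻¹ ⪯ 0, and in particular the ellipsoid {x : xᵀE⁻¹x ≤ 1} is invariant under x ↦ (A+BK)x. -/
/-!
Write `M = A + BK`, so that `AE + BY = ME`. The lower-right block `E` of the LMI is positive
definite, so its Schur complement gives `E + S - E Mᵀ E⁻¹ M E ⪰ 0`, and the congruence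
`X ↦ E⁻¹ X E⁻¹` turns this into `E⁻¹ S E⁻¹ - (Mᵀ E⁻¹ M - E⁻¹) ⪰ 0`. Adding `-E⁻¹ S E⁻¹ ⪰ 0`
gives `E⁻¹ - Mᵀ E⁻¹ M ⪰ 0`, i.e. `x ↦ xᵀ E⁻¹ x` does not increase along `x ↦ M x`.
-/

open Matrix

namespace Matrix

variable {n R : Type*} [Fintype n] [CommRing R] [StarRing R]

theorem conjTranspose_inv_mul_schur_mul_inv_eq [DecidableEq n] {E S M : Matrix n n R}
    (hE : E.IsHermitian) [Invertible E] :
    E⁻¹ᴴ * (E + S - (M * E)ᴴ * E⁻¹ * (M * E)ᴴᴴ) * E⁻¹ =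
      E⁻¹ * S * E⁻¹ - (Mᴴ * E⁻¹ * M - E⁻¹) := by
  have hinv : E⁻¹ * E = 1 := inv_mul_of_invertible E
  have hinv' : E * E⁻¹ = 1 := mul_inv_of_invertible E
  rw [hE.inv.eq, conjTranspose_conjTranspose, conjTranspose_mul, hE.eq]
  calc E⁻¹ * (E + S - E * Mᴴ * E⁻¹ * (M * E)) * E⁻¹
      = E⁻¹ * S * E⁻¹ + (E⁻¹ * E) * E⁻¹
          - (E⁻¹ * E) * (Mᴴ * E⁻¹ * M) * (E * E⁻¹) := by noncomm_ring
    _ = E⁻¹ * S * E⁻¹ - (Mᴴ * E⁻¹ * M - E⁻¹) := by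
      rw [hinv, hinv', Matrix.one_mul, Matrix.one_mul, Matrix.mul_one]
      abel

theorem PosSemidef.lyapunov_of_fromBlocks {K : Type*} [DecidableEq n] [Field K] [PartialOrder K]
    [StarRing K] [StarOrderedRing K] {E S M : Matrix n n K} (hE : E.PosDef)
    (h : (fromBlocks (E + S) (M * E)ᴴ (M * E) E).PosSemidef) :
    (E⁻¹ * S * E⁻¹ - (Mᴴ * E⁻¹ * M - E⁻¹)).PosSemidef := by
  let _ := hE.isUnit.invertible
  have hschur : (E + S - (M * E)ᴴ * E⁻¹ * (M * E)ᴴᴴ).PosSemidef :=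
    (PosDef.fromBlocks₂₂ _ _ hE).mp (by rwa [conjTranspose_conjTranspose])
  simpa only [conjTranspose_inv_mul_schur_mul_inv_eq hE.isHermitian] using
    hschur.conjTranspose_mul_mul_same E⁻¹

variable [PartialOrder R]

theorem PosSemidef.neg_conjTranspose_mul_mul_same {S : Matrix n n R} (hS : (-S).PosSemidef)
    (B : Matrix n n R) : (-(Bᴴ * S * B)).PosSemidef := by
  simpa only [Matrix.mul_neg, Matrix.neg_mul] using hS.conjTranspose_mul_mul_same B

theorem PosSemidef.dotProduct_mulVec_mulVec_le [IsOrderedAddMonoid R] {P M : Matrix n n R}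
    (h : (P - Mᴴ * P * M).PosSemidef) (x : n → R) :
    star (M *ᵥ x) ⬝ᵥ (P *ᵥ (M *ᵥ x)) ≤ star x ⬝ᵥ (P *ᵥ x) := by
  have hx := h.dotProduct_mulVec_nonneg x
  rwa [sub_mulVec, dotProduct_sub, sub_nonneg, ← mulVec_mulVec, ← mulVec_mulVec,
    dotProduct_mulVec, vecMul_conjTranspose, star_star] at hx

end Matrix

theorem stmt_15_general (n m : ℕ)
    (E S A : Matrix (Fin n) (Fin n) ℝ)
    (B : Matrix (Fin n) (Fin m) ℝ)
    (K Y : Matrix (Fin m) (Fin n) ℝ)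
    (hE : E.PosDef) (hY : Y = K * E)
    (hSneg : (-S).PosSemidef)
    (hblk : (Matrix.fromBlocks (E + S) (E * Aᵀ + Yᵀ * Bᵀ) (A * E + B * Y) E).PosSemidef) :
    (E⁻¹ * S * E⁻¹ - ((A + B * K)ᵀ * E⁻¹ * (A + B * K) - E⁻¹)).PosSemidef ∧
    (-(E⁻¹ * S * E⁻¹)).PosSemidef ∧
    ∀ x : Fin n → ℝ, x ⬝ᵥ E⁻¹.mulVec x ≤ 1 →
      ((A + B * K).mulVec x) ⬝ᵥ E⁻¹.mulVec ((A + B * K).mulVec x) ≤ 1 := by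
  set M := A + B * K
  simp only [← conjTranspose_eq_transpose_of_trivial] at hblk ⊢
  have hblk' : (fromBlocks (E + S) (M * E)ᴴ (M * E) E).PosSemidef := by
    have hME : A * E + B * Y = M * E := by rw [hY, Matrix.add_mul, Matrix.mul_assoc]
    rwa [← hME, conjTranspose_add, conjTranspose_mul, conjTranspose_mul, hE.isHermitian.eq]
  have hlyap := hblk'.lyapunov_of_fromBlocks hE
  have hneg : (-(E⁻¹ * S * E⁻¹)).PosSemidef := by
    simpa only [hE.isHermitian.inv.eq] using hSneg.neg_conjTranspose_mul_mul_same E⁻¹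
  have hdecr : (E⁻¹ - Mᴴ * E⁻¹ * M).PosSemidef := by
    have hsum := hlyap.add hneg
    rwa [show E⁻¹ * S * E⁻¹ - (Mᴴ * E⁻¹ * M - E⁻¹) + -(E⁻¹ * S * E⁻¹) =
      E⁻¹ - Mᴴ * E⁻¹ * M by abel] at hsum
  refine ⟨hlyap, hneg, fun x hx => ?_⟩
  simpa only [star_trivial] using
    (hdecr.dotProduct_mulVec_mulVec_le x).trans (by rwa [star_trivial])

/-- Linearized invariance LMI: if `E ≻ 0`, `Y = KE`, `S ⪯ 0` symmetric, and
`[[E + S, EAᵀ + YᵀBᵀ],[AE + BY, E]] ⪰ 0`, then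
`(A+BK)ᵀE⁻¹(A+BK) − E⁻¹ ⪯ E⁻¹SE⁻¹ ⪯ 0`, and in particular the ellipsoid
`{x : xᵀE⁻¹x ≤ 1}` is invariant under `x ↦ (A+BK)x`. -/
theorem stmt_15 (n m : ℕ)
    (E S A : Matrix (Fin n) (Fin n) ℝ)
    (B : Matrix (Fin n) (Fin m) ℝ)
    (K Y : Matrix (Fin m) (Fin n) ℝ)
    (hE : E.PosDef) (hEsym : E.IsSymm) (hY : Y = K * E)
    (hSsym : S.IsSymm) (hSneg : (-S).PosSemidef)
    (hblk : (Matrix.fromBlocks (E + S) (E * Aᵀ + Yᵀ * Bᵀ) (A * E + B * Y) E).PosSemidef) :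
    (E⁻¹ * S * E⁻¹ - ((A + B * K)ᵀ * E⁻¹ * (A + B * K) - E⁻¹)).PosSemidef ∧
    (-(E⁻¹ * S * E⁻¹)).PosSemidef ∧
    ∀ x : Fin n → ℝ, x ⬝ᵥ E⁻¹.mulVec x ≤ 1 →
      ((A + B * K).mulVec x) ⬝ᵥ E⁻¹.mulVec ((A + B * K).mulVec x) ≤ 1 :=
  stmt_15_general n m E S A B K Y hE hY hSneg hblk
end
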